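/- Let f be a face of a convex polytope τ in ℝ^d and let h be a hyperplane that does not meet the interior of τ. If f is the minimal face of τ containing a segment [q₁,q₂] with q₁, q₂ ∈ h ∩ τ, then f ⊆ h. -/

import Mathlib

/-!
A hyperplane `{g = c₀}` missing the interior of the convex body `τ` leaves that interior,
which is connected, on one side; since `τ` is the closure of its interior, all of `τ` lies on
that side. So the hyperplane supports `τ`, `τ ∩ {g = c₀}` is a face containing `[q₁, q₂]`, and
the minimal face `F` lies inside it.
-/

/-- A face of a convex polytope `τ`: the empty set, `τ` itself, or the intersection
of `τ` with a supporting hyperplane. -/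
def IsFace {d : ℕ} (C F : Set (EuclideanSpace ℝ (Fin d))) : Prop :=
  F = ∅ ∨ F = C ∨
    ∃ (f : EuclideanSpace ℝ (Fin d) →ₗ[ℝ] ℝ) (c : ℝ), f ≠ 0 ∧
      (∀ y ∈ C, f y ≤ c) ∧ F = C ∩ {y | f y = c}

open Set

theorem IsPreconnected.forall_le_or_forall_ge_of_forall_ne {X : Type*} [TopologicalSpace X]
    {s : Set X} (hs : IsPreconnected s) {g : X → ℝ} (hg : ContinuousOn g s) {c : ℝ}
    (hne : ∀ y ∈ s, g y ≠ c) : (∀ y ∈ s, g y ≤ c) ∨ (∀ y ∈ s, c ≤ g y) := by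
  by_contra! h
  obtain ⟨⟨a, ha, hac⟩, ⟨b, hb, hbc⟩⟩ := h
  obtain ⟨z, hz, hzc⟩ := hs.intermediate_value hb ha hg ⟨hbc.le, hac.le⟩
  exact hne z hz hzc

theorem Convex.forall_le_or_forall_ge_of_forall_ne_interior {E : Type*} [AddCommGroup E]
    [Module ℝ E] [TopologicalSpace E] [IsTopologicalAddGroup E] [ContinuousSMul ℝ E]
    {s : Set E} (hs : Convex ℝ s) (hint : (interior s).Nonempty) {g : E → ℝ}
    (hg : Continuous g) {c : ℝ} (hne : ∀ y ∈ interior s, g y ≠ c) :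
    (∀ y ∈ s, g y ≤ c) ∨ (∀ y ∈ s, c ≤ g y) := by
  have hcl : s ⊆ closure (interior s) :=
    hs.closure_interior_eq_closure_of_nonempty_interior hint ▸ subset_closure
  refine (hs.interior.isPreconnected.forall_le_or_forall_ge_of_forall_ne
    hg.continuousOn hne).imp (fun hle y hy => ?_) (fun hge y hy => ?_)
  · exact closure_minimal hle (isClosed_le hg continuous_const) (hcl hy)
  · exact closure_minimal hge (isClosed_le continuous_const hg) (hcl hy)

theorem isFace_inter_hyperplane {d : ℕ} {C : Set (EuclideanSpace ℝ (Fin d))}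
    {g : EuclideanSpace ℝ (Fin d) →ₗ[ℝ] ℝ} (hg : g ≠ 0) {c : ℝ}
    (hside : (∀ y ∈ C, g y ≤ c) ∨ (∀ y ∈ C, c ≤ g y)) :
    IsFace C (C ∩ {y | g y = c}) := by
  refine Or.inr (Or.inr ?_)
  rcases hside with hle | hge
  · exact ⟨g, c, hg, hle, rfl⟩
  · refine ⟨-g, -c, neg_ne_zero.mpr hg, fun y hy => by simpa using hge y hy, ?_⟩
    ext y
    simp [neg_inj]

theorem stmt_3_general {d : ℕ} (τ : Set (EuclideanSpace ℝ (Fin d)))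
    (m : ℕ) (f : Fin m → (EuclideanSpace ℝ (Fin d) →ₗ[ℝ] ℝ)) (c : Fin m → ℝ)
    (hτ : τ = ⋂ i, {y | f i y ≤ c i})
    (hint : (interior τ).Nonempty)
    (g : EuclideanSpace ℝ (Fin d) →ₗ[ℝ] ℝ) (hg : g ≠ 0) (c₀ : ℝ)
    (hdisj : {y | g y = c₀} ∩ interior τ = ∅)
    (q₁ q₂ : EuclideanSpace ℝ (Fin d))
    (hq₁ : g q₁ = c₀ ∧ q₁ ∈ τ) (hq₂ : g q₂ = c₀ ∧ q₂ ∈ τ)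
    (F : Set (EuclideanSpace ℝ (Fin d)))
    (hmin : ∀ F', IsFace τ F' → segment ℝ q₁ q₂ ⊆ F' → F ⊆ F') :
    F ⊆ {y | g y = c₀} := by
  have hconv : Convex ℝ τ :=
    hτ ▸ convex_iInter fun i => convex_halfSpace_le (f i).isLinear (c i)
  have hside := hconv.forall_le_or_forall_ge_of_forall_ne_interior hint
    g.continuous_of_finiteDimensional fun y hy hyc => hdisj.subset ⟨hyc, hy⟩
  have hseg : segment ℝ q₁ q₂ ⊆ τ ∩ {y | g y = c₀} :=
    (hconv.inter (convex_hyperplane g.isLinear c₀)).segment_subset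
      ⟨hq₁.2, hq₁.1⟩ ⟨hq₂.2, hq₂.1⟩
  exact (hmin _ (isFace_inter_hyperplane hg hside) hseg).trans inter_subset_right

/-- Let `τ` be a convex polytope with nonempty interior and `h = {g = c}` a hyperplane
with `h ∩ interior τ = ∅`. If `F` is the smallest face of `τ` containing a segment
`[q₁, q₂]` with `q₁, q₂ ∈ h ∩ τ`, then `F ⊆ h`. -/
theorem stmt_3 {d : ℕ} (τ : Set (EuclideanSpace ℝ (Fin d)))
    (m : ℕ) (f : Fin m → (EuclideanSpace ℝ (Fin d) →ₗ[ℝ] ℝ)) (c : Fin m → ℝ)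
    (hτ : τ = ⋂ i, {y | f i y ≤ c i}) (hbdd : Bornology.IsBounded τ)
    (hint : (interior τ).Nonempty)
    (g : EuclideanSpace ℝ (Fin d) →ₗ[ℝ] ℝ) (hg : g ≠ 0) (c₀ : ℝ)
    (hdisj : {y | g y = c₀} ∩ interior τ = ∅)
    (q₁ q₂ : EuclideanSpace ℝ (Fin d))
    (hq₁ : g q₁ = c₀ ∧ q₁ ∈ τ) (hq₂ : g q₂ = c₀ ∧ q₂ ∈ τ)
    (F : Set (EuclideanSpace ℝ (Fin d)))
    (hF : IsFace τ F) (hseg : segment ℝ q₁ q₂ ⊆ F)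
    (hmin : ∀ F', IsFace τ F' → segment ℝ q₁ q₂ ⊆ F' → F ⊆ F') :
    F ⊆ {y | g y = c₀} :=
  stmt_3_general τ m f c hτ hint g hg c₀ hdisj q₁ q₂ hq₁ hq₂ F hmin
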